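/- arXiv:1603.01753 — 8 statements merged into one kernel-verified Lean document; each statement's English description precedes it below -/
import Mathlib

section
/- Let K be a compact Hausdorff space satisfying the countable chain condition (every family of pairwise disjoint nonempty open subsets of K is countable), let m be a positive natural number, and let (V_ξ)_{ξ<ω₁} be an uncountable family of nonempty open subsets of K indexed by the first uncountable ordinal. Then there exist m distinct indices ξ₁, ..., ξ_m < ω₁ such that V_{ξ₁} ∩ ... ∩ V_{ξ_m} ≠ ∅. -/
open Set

theorem ccc_key {K : Type*} [TopologicalSpace K]
    (hccc : ∀ 𝒰 : Set (Set K), (∀ u ∈ 𝒰, IsOpen u ∧ u.Nonempty) →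
      𝒰.Pairwise Disjoint → 𝒰.Countable) :
    ∀ (m : ℕ) {ι : Type*} (V : ι → Set K) (S : Set ι), ¬ S.Countable →
      (∀ ξ ∈ S, IsOpen (V ξ) ∧ (V ξ).Nonempty) →
      ∃ f : Fin m → ι, Function.Injective f ∧ (∀ i, f i ∈ S) ∧
        (⋂ i, V (f i)).Nonempty := by
  intro m
  induction m with
  | zero =>
    intro ι V S hS hV
    have hSne : S.Nonempty := by
      rcases S.eq_empty_or_nonempty with h | h
      · exact absurd (h ▸ countable_empty) hS
      · exact h
    obtain ⟨ξ, hξ⟩ := hSne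
    obtain ⟨x, -⟩ := (hV ξ hξ).2
    exact ⟨Fin.elim0, fun i => i.elim0, fun i => i.elim0,
      ⟨x, by simp⟩⟩
  | succ m ih =>
    intro ι V S hS hV
    -- maximal pairwise disjoint subfamily
    obtain ⟨A, hAmem, hAmax⟩ :=
      zorn_subset {A : Set ι | A ⊆ S ∧ A.Pairwise fun ξ η => Disjoint (V ξ) (V η)}
        (fun c hc hchain => by
          refine ⟨⋃₀ c, ⟨?_, ?_⟩, fun s hs => subset_sUnion_of_mem hs⟩
          · exact sUnion_subset fun s hs => (hc hs).1
          · intro ξ hξ η hη hne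
            obtain ⟨s, hs, hξs⟩ := hξ
            obtain ⟨t, ht, hηt⟩ := hη
            rcases hchain.total hs ht with hst | hts
            · exact (hc ht).2 (hst hξs) hηt hne
            · exact (hc hs).2 hξs (hts hηt) hne)
    obtain ⟨hAS, hAdisj⟩ := hAmem
    -- V is injective on A
    have hinj : InjOn V A := by
      intro ξ hξ η hη hVeq
      by_contra hne
      obtain ⟨x, hx⟩ := (hV ξ (hAS hξ)).2
      exact (hAdisj hξ hη hne).ne_of_mem hx (hVeq ▸ hx) rfl
    -- A is countable by ccc
    have hAc : A.Countable := by
      have h𝒰 : (V '' A).Countable := by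
        refine hccc _ (fun u hu => ?_) (fun u hu v hv huv => ?_)
        · obtain ⟨ξ, hξ, rfl⟩ := hu
          exact hV ξ (hAS hξ)
        · obtain ⟨ξ, hξ, rfl⟩ := hu
          obtain ⟨η, hη, rfl⟩ := hv
          exact hAdisj hξ hη (fun h => huv (h ▸ rfl))
      exact (mapsTo_image V A).countable_of_injOn hinj h𝒰
    -- every ξ ∈ S meets some V η, η ∈ A
    have hcover : S ⊆ ⋃ η ∈ A, {ξ ∈ S | ¬ Disjoint (V ξ) (V η)} := by
      intro ξ hξ
      by_cases hξA : ξ ∈ A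
      · refine mem_biUnion hξA ⟨hξ, ?_⟩
        obtain ⟨x, hx⟩ := (hV ξ hξ).2
        exact fun h => h.ne_of_mem hx hx rfl
      · by_contra hcon
        simp only [mem_iUnion, mem_setOf_eq, not_exists] at hcon
        have hins : insert ξ A ∈
            {A : Set ι | A ⊆ S ∧ A.Pairwise fun ξ η => Disjoint (V ξ) (V η)} := by
          constructor
          · exact insert_subset hξ hAS
          · intro a ha b hb hab
            rcases ha with rfl | ha
            · rcases hb with rfl | hb
              · exact absurd rfl hab
              · by_contra h
                exact hcon b hb ⟨hξ, h⟩
            · rcases hb with rfl | hb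
              · by_contra h
                exact hcon a ha ⟨hξ, fun h' => h h'.symm⟩
              · exact hAdisj ha hb hab
        exact hξA (hAmax hins (subset_insert ξ A) (mem_insert ξ A))
    -- some η ∈ A works for uncountably many ξ
    obtain ⟨η, hηA, hTu⟩ :
        ∃ η ∈ A, ¬ ({ξ ∈ S | ¬ Disjoint (V ξ) (V η)}).Countable := by
      by_contra hcon
      push_neg at hcon
      exact hS ((Countable.biUnion hAc hcon).mono hcover)
    set T : Set ι := {ξ ∈ S | ¬ Disjoint (V ξ) (V η)} \ {η} with hT
    have hTu' : ¬ T.Countable := by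
      intro h
      exact hTu (((h.union (countable_singleton η))).mono (by
        intro ξ hξ
        by_cases hξη : ξ = η
        · exact Or.inr (by simp [hξη])
        · exact Or.inl ⟨hξ, hξη⟩))
    -- apply IH to the family ξ ↦ V η ∩ V ξ over T
    obtain ⟨f, hfinj, hfT, x, hx⟩ :=
      ih (fun ξ => V η ∩ V ξ) T hTu'
        (fun ξ hξ => ⟨((hV η (hAS hηA)).1).inter (hV ξ hξ.1.1).1,
          not_disjoint_iff.1 (fun h => hξ.1.2 h.symm)⟩)
    -- assemble m+1 indices
    refine ⟨Fin.cons η f, ?_, ?_, ?_⟩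
    · intro i j hij
      rcases Fin.eq_zero_or_eq_succ i with rfl | ⟨i', rfl⟩ <;>
        rcases Fin.eq_zero_or_eq_succ j with rfl | ⟨j', rfl⟩
      · rfl
      · simp only [Fin.cons_zero, Fin.cons_succ] at hij
        exact absurd hij.symm (hfT j').2
      · simp only [Fin.cons_zero, Fin.cons_succ] at hij
        exact absurd hij (hfT i').2
      · simp only [Fin.cons_succ] at hij
        exact congrArg Fin.succ (hfinj hij)
    · intro i
      rcases Fin.eq_zero_or_eq_succ i with rfl | ⟨i', rfl⟩
      · exact hAS hηA
      · simpa using (hfT i').1.1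
    · rcases Nat.eq_zero_or_pos m with rfl | hm
      · obtain ⟨y, hy⟩ := (hV η (hAS hηA)).2
        refine ⟨y, mem_iInter.2 fun i => ?_⟩
        rcases Fin.eq_zero_or_eq_succ i with rfl | ⟨i', rfl⟩
        · simpa using hy
        · exact i'.elim0
      · refine ⟨x, mem_iInter.2 fun i => ?_⟩
        have hx' := mem_iInter.1 hx
        rcases Fin.eq_zero_or_eq_succ i with rfl | ⟨i', rfl⟩
        · simpa using (hx' ⟨0, hm⟩).1
        · simpa using (hx' i').2

/-- In a c.c.c. compact Hausdorff space, any uncountable family of nonempty open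
sets indexed by ω₁ contains `m` distinct members with nonempty intersection. -/
theorem stmt_0 (K : Type*) [TopologicalSpace K] [CompactSpace K] [T2Space K]
    (hccc : ∀ 𝒰 : Set (Set K), (∀ u ∈ 𝒰, IsOpen u ∧ u.Nonempty) →
      𝒰.Pairwise Disjoint → 𝒰.Countable)
    (m : ℕ) (hm : 0 < m)
    (V : (Set.Iio (Cardinal.aleph 1).ord) → Set K)
    (hVopen : ∀ ξ, IsOpen (V ξ)) (hVne : ∀ ξ, (V ξ).Nonempty) :
    ∃ ξ : Fin m → (Set.Iio (Cardinal.aleph 1).ord),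
      Function.Injective ξ ∧ (⋂ i, V (ξ i)).Nonempty := by
  have huniv : ¬ (Set.univ : Set (Set.Iio (Cardinal.aleph 1).ord)).Countable := by
    rw [Set.countable_univ_iff]
    intro h
    have h1 := Ordinal.mk_Iio_ordinal (Cardinal.aleph 1).ord
    rw [Cardinal.card_ord] at h1
    have h2 := Cardinal.mk_le_aleph0 (α := Set.Iio (Cardinal.aleph 1).ord)
    rw [h1, Cardinal.lift_le_aleph0] at h2
    exact absurd h2 (not_le.2 Cardinal.aleph0_lt_aleph_one)
  obtain ⟨f, hfinj, -, hne⟩ :=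
    ccc_key hccc m V Set.univ huniv (fun ξ _ => ⟨hVopen ξ, hVne ξ⟩)
  exact ⟨f, hfinj, hne⟩
end

section
/- Let K be a compact Hausdorff space, let (f_n)_{n∈ℕ} ⊆ C(K, [0,1]) be a sequence of pairwise disjoint continuous functions (f_n · f_m = 0 for n ≠ m), and let f ∈ C(K, [0,1]). Then f is the supremum of (f_n)_{n∈ℕ} in the lattice C(K) of real-valued continuous functions if and only if the set Δ = { x ∈ K : f(x) ≠ Σ_{n∈ℕ} f_n(x) } is nowhere dense in K. -/
open Set

/-- `f` is the supremum of a pairwise disjoint sequence `(fₙ)` in the lattice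
`C(K)` iff the set where `f` differs from `∑ₙ fₙ` is nowhere dense. -/
theorem stmt_6 (K : Type*) [TopologicalSpace K] [CompactSpace K] [T2Space K]
    (f : C(K, ℝ)) (fn : ℕ → C(K, ℝ))
    (hf : ∀ x, f x ∈ Icc (0 : ℝ) 1)
    (hfn : ∀ n x, fn n x ∈ Icc (0 : ℝ) 1)
    (hdisj : ∀ n m, n ≠ m → ∀ x, fn n x * fn m x = 0) :
    IsLUB (Set.range fn) f ↔ IsNowhereDense {x | f x ≠ ∑' n, fn n x} := by
  have hfn0 : ∀ n x, 0 ≤ fn n x := fun n x => (hfn n x).1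
  set Δ : Set K := {x | f x ≠ ∑' n, fn n x} with hΔ
  -- the tsum has at most one nonzero term
  have htsum : ∀ x : K, ∃ n, (∑' m, fn m x) = fn n x ∧ ∀ m, fn m x ≤ fn n x := by
    intro x
    by_cases h : ∃ n, fn n x ≠ 0
    · obtain ⟨n, hn⟩ := h
      have hz : ∀ m, m ≠ n → fn m x = 0 := by
        intro m hm
        rcases mul_eq_zero.1 (hdisj m n hm x) with h1 | h1
        · exact h1
        · exact absurd h1 hn
      refine ⟨n, tsum_eq_single n hz, fun m => ?_⟩
      by_cases hmn : m = n
      · subst hmn; exact le_refl _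
      · rw [hz m hmn]; exact hfn0 n x
    · push_neg at h
      exact ⟨0, by simp [h], fun m => by rw [h m, h 0]⟩
  constructor
  · intro hlub
    have hub : ∀ n, fn n ≤ f := fun n => hlub.1 (mem_range_self n)
    -- key perturbation lemma
    have key : ∀ (W : Set K), IsOpen W → ∀ (c : C(K, ℝ)),
        (∀ m, ∀ x ∈ W, fn m x ≤ c x) → ∀ x ∈ W, f x ≤ c x := by
      intro W hW c hc x₀ hx₀
      by_contra hlt
      push_neg at hlt
      set ε := (f x₀ - c x₀) / 4 with hε
      have hεpos : 0 < ε := by simp only [hε]; linarith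
      set W₂ := W ∩ {x | f x₀ - ε < f x} ∩ {x | c x < c x₀ + ε} with hW₂
      have hW₂open : IsOpen W₂ := by
        apply IsOpen.inter
        apply IsOpen.inter hW
        · exact isOpen_lt continuous_const f.continuous
        · exact isOpen_lt c.continuous continuous_const
      have hx₀W₂ : x₀ ∈ W₂ := ⟨⟨hx₀, by simp; linarith⟩, by simp; linarith⟩
      obtain ⟨φ, hφ0, hφ1, hφmem⟩ := exists_continuous_zero_one_of_isClosed
        (isClosed_compl_iff.2 hW₂open) (isClosed_singleton (x := x₀))
        (by rw [Set.disjoint_singleton_right]; simp [hx₀W₂])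
      set g : C(K, ℝ) := f - (2 * ε) • φ with hg
      have hgx : ∀ x, g x = f x - 2 * ε * φ x := fun x => by simp [hg]
      have hub' : g ∈ upperBounds (Set.range fn) := by
        rintro _ ⟨m, rfl⟩
        rw [ContinuousMap.le_def]
        intro x
        by_cases hx : x ∈ W₂
        · have h1 : fn m x ≤ c x := hc m x hx.1.1
          have h2 : f x₀ - ε < f x := hx.1.2
          have h3 : c x < c x₀ + ε := hx.2
          have h4 : φ x ≤ 1 := (hφmem x).2
          rw [hgx]
          nlinarith [hεpos]
        · have : φ x = 0 := hφ0 hx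
          rw [hgx, this]
          simpa using (hub m) x
      have hfg := hlub.2 hub'
      have hφx₀ : φ x₀ = 1 := by simpa using hφ1 rfl
      have := (ContinuousMap.le_def.1 hfg) x₀
      rw [hgx, hφx₀] at this
      linarith
    -- now show nowhere dense
    rw [IsNowhereDense]
    by_contra hne
    set V := interior (closure Δ) with hV
    have hVopen : IsOpen V := isOpen_interior
    obtain ⟨y, hy⟩ := Set.nonempty_iff_ne_empty.2 hne
    -- a nonempty open subset of V avoiding Δ yields a contradiction
    have contra : ∀ (W : Set K), IsOpen W → W.Nonempty → W ⊆ V → W ∩ Δ = ∅ → False := by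
      intro W hWopen ⟨z, hz⟩ hWV hWΔ
      have hzcl : z ∈ closure Δ := interior_subset (hWV hz)
      obtain ⟨w, hw1, hw2⟩ := mem_closure_iff.1 hzcl W hWopen hz
      exact absurd (Set.mem_inter hw1 hw2) (by rw [hWΔ]; exact notMem_empty w)
    by_cases hcase : ∃ n, ∃ x ∈ V, 0 < fn n x
    · obtain ⟨n, x, hxV, hxpos⟩ := hcase
      set W := V ∩ fn n ⁻¹' Set.Ioi 0 with hW
      have hWopen : IsOpen W := hVopen.inter (isOpen_Ioi.preimage (fn n).continuous)
      have hc : ∀ m, ∀ z ∈ W, fn m z ≤ fn n z := by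
        intro m z hz
        by_cases hmn : m = n
        · subst hmn; exact le_refl _
        · rcases mul_eq_zero.1 (hdisj m n hmn z) with h1 | h1
          · rw [h1]; exact hfn0 n z
          · exact absurd h1 (ne_of_gt hz.2)
      apply contra W hWopen ⟨x, hxV, hxpos⟩ (Set.inter_subset_left)
      ext z
      simp only [Set.mem_inter_iff, Set.mem_empty_iff_false, iff_false, not_and]
      intro hzW hzΔ
      have h1 : f z ≤ fn n z := key W hWopen (fn n) hc z hzW
      have h2 : fn n z ≤ f z := (hub n) z
      obtain ⟨k, hk1, hk2⟩ := htsum z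
      have : fn k z = fn n z := le_antisymm (hc k z hzW) (hk2 n)
      exact hzΔ (by rw [hk1, this]; exact le_antisymm h1 h2)
    · push_neg at hcase
      apply contra V hVopen ⟨y, hy⟩ (le_refl _)
      ext z
      simp only [Set.mem_inter_iff, Set.mem_empty_iff_false, iff_false, not_and]
      intro hzV hzΔ
      have hz0 : ∀ m, fn m z = 0 := fun m =>
        le_antisymm (hcase m z hzV) (hfn0 m z)
      have h1 : f z ≤ 0 := by
        have := key V hVopen 0 (fun m x hx => by
          simpa using le_antisymm (hcase m x hx) (hfn0 m x) |>.le) z hzV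
        simpa using this
      have h2 : (0:ℝ) ≤ f z := le_trans (hfn0 0 z) ((hub 0) z)
      have hfz : f z = 0 := le_antisymm h1 h2
      obtain ⟨k, hk1, _⟩ := htsum z
      exact hzΔ (by rw [hk1, hz0 k, hfz])
  · intro hnwd
    have hD : Dense (closure Δ)ᶜ := by
      rw [IsNowhereDense] at hnwd
      exact interior_eq_empty_iff_dense_compl.mp hnwd
    have hDeq : ∀ x ∈ (closure Δ)ᶜ, f x = ∑' m, fn m x := by
      intro x hx
      have : x ∉ Δ := fun h => hx (subset_closure h)
      simpa [hΔ] using this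
    -- a pointwise inequality on the dense set extends everywhere
    have dense_le : ∀ (u v : C(K, ℝ)), (∀ x ∈ (closure Δ)ᶜ, u x ≤ v x) → u ≤ v := by
      intro u v huv
      rw [ContinuousMap.le_def]
      intro x
      have hcl : closure ((closure Δ)ᶜ) ⊆ {y | u y ≤ v y} :=
        closure_minimal huv (isClosed_le u.continuous v.continuous)
      have : x ∈ closure ((closure Δ)ᶜ) := by rw [hD.closure_eq]; trivial
      exact hcl this
    constructor
    · rintro _ ⟨n, rfl⟩
      apply dense_le
      intro x hx
      obtain ⟨k, hk1, hk2⟩ := htsum x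
      rw [hDeq x hx, hk1]
      exact hk2 n
    · intro h hh
      have hhub : ∀ n, fn n ≤ h := fun n => hh (mem_range_self n)
      apply dense_le
      intro x hx
      obtain ⟨k, hk1, _⟩ := htsum x
      rw [hDeq x hx, hk1]
      exact (hhub k) x
end

section
/- Let K be a compact Hausdorff space and let (f_n)_{n∈ℕ} ⊆ C(K, [0,1]) be pairwise disjoint (f_n · f_m = 0 for n ≠ m). Then the set D = ⋃{ U : U open in K and {n ∈ ℕ : U ∩ supp(f_n) ≠ ∅} is finite } is open and dense in K. -/
open Set

theorem stmt_7 (K : Type*) [TopologicalSpace K] [CompactSpace K] [T2Space K]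
    (fn : ℕ → C(K, ℝ))
    (hfn : ∀ n x, fn n x ∈ Icc (0 : ℝ) 1)
    (hdisj : ∀ n m, n ≠ m → ∀ x, fn n x * fn m x = 0) :
    IsOpen (⋃₀ {U : Set K | IsOpen U ∧
        {n : ℕ | (U ∩ Function.support (fn n)).Nonempty}.Finite}) ∧
      Dense (⋃₀ {U : Set K | IsOpen U ∧
        {n : ℕ | (U ∩ Function.support (fn n)).Nonempty}.Finite}) := by
  have hsupp : ∀ n, IsOpen (Function.support (fn n)) := by
    intro n
    rw [Function.support_eq_preimage]
    exact isOpen_compl_singleton.preimage (fn n).continuous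
  constructor
  · exact isOpen_sUnion fun U hU => hU.1
  · rw [dense_iff_inter_open]
    rintro V hV ⟨x, hx⟩
    by_cases h : ∃ n, (V ∩ Function.support (fn n)).Nonempty
    · obtain ⟨n, y, hyV, hy⟩ := h
      refine ⟨y, hyV, mem_sUnion.2 ⟨V ∩ Function.support (fn n), ⟨hV.inter (hsupp n), ?_⟩,
        hyV, hy⟩⟩
      refine (Set.finite_singleton n).subset ?_
      rintro m ⟨z, ⟨_, hz1⟩, hz2⟩
      by_contra hmn
      have := hdisj n m (fun e => hmn (e ▸ rfl)) z
      rcases mul_eq_zero.1 this with h0 | h0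
      · exact hz1 h0
      · exact hz2 h0
    · push_neg at h
      refine ⟨x, hx, mem_sUnion.2 ⟨V, ⟨hV, ?_⟩, hx⟩⟩
      convert Set.finite_empty
      exact eq_empty_iff_forall_notMem.2 fun n hn => hn.ne_empty (h n)
end

section
/- Let K be a compact Hausdorff space, let (f_n)_{n∈ℕ} ⊆ C(K, [0,1]) be pairwise disjoint, suppose the supremum f = ⋁_{n∈ℕ} f_n exists in C(K), and let D = ⋃{ U : U open, {n : U ∩ supp(f_n) ≠ ∅} finite }. Then f restricted to D equals Σ_{n∈ℕ} f_n restricted to D. -/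
open Set

theorem stmt_8 (K : Type*) [TopologicalSpace K] [CompactSpace K] [T2Space K]
    (f : C(K, ℝ)) (fn : ℕ → C(K, ℝ))
    (hfn : ∀ n x, fn n x ∈ Icc (0 : ℝ) 1)
    (hdisj : ∀ n m, n ≠ m → ∀ x, fn n x * fn m x = 0)
    (hsup : IsLUB (Set.range fn) f) :
    ∀ x ∈ ⋃₀ {U : Set K | IsOpen U ∧
        {n : ℕ | (U ∩ Function.support (fn n)).Nonempty}.Finite},
      f x = ∑' n, fn n x := by
  classical
  rintro x ⟨U, ⟨hU, hS⟩, hxU⟩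
  have hzeroU : ∀ y ∈ U, ∀ n ∉ hS.toFinset, fn n y = 0 := by
    intro y hy n hn
    simp only [Set.Finite.mem_toFinset, mem_setOf_eq] at hn
    by_contra h
    exact hn ⟨y, hy, h⟩
  have htsum : ∑' n, fn n x = ∑ n ∈ hS.toFinset, fn n x :=
    tsum_eq_sum (fun n hn => hzeroU x hxU n hn)
  rw [htsum]
  have hub : ∀ n, fn n ≤ f := fun n => hsup.1 ⟨n, rfl⟩
  have hf0 : (0 : ℝ) ≤ f x := le_trans (hfn 0 x).1 (hub 0 x)
  obtain ⟨φ, hφ0, hφ1, hφmem⟩ := exists_continuous_zero_one_of_isClosed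
    (isClosed_singleton (x := x)) (isClosed_compl_iff.mpr hU)
    (by simp [disjoint_singleton_left, hxU])
  set g : C(K, ℝ) := (∑ n ∈ hS.toFinset, fn n) + φ with hg_def
  have hgapp : ∀ y, g y = (∑ n ∈ hS.toFinset, fn n y) + φ y := by
    intro y; simp [hg_def]
  have hg : ∀ n, fn n ≤ g := by
    intro n y
    show fn n y ≤ g y
    rw [hgapp]
    by_cases hy : y ∈ U
    · by_cases hn : n ∈ hS.toFinset
      · have h1 : fn n y ≤ ∑ m ∈ hS.toFinset, fn m y :=
          Finset.single_le_sum (fun m _ => (hfn m y).1) hn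
        have h2 : (0 : ℝ) ≤ φ y := (hφmem y).1
        linarith
      · have h1 : fn n y = 0 := hzeroU y hy n hn
        have h2 : (0 : ℝ) ≤ ∑ m ∈ hS.toFinset, fn m y :=
          Finset.sum_nonneg (fun m _ => (hfn m y).1)
        have h3 : (0 : ℝ) ≤ φ y := (hφmem y).1
        linarith
    · have h1 : φ y = 1 := hφ1 hy
      have h2 : (0 : ℝ) ≤ ∑ m ∈ hS.toFinset, fn m y :=
        Finset.sum_nonneg (fun m _ => (hfn m y).1)
      have h3 : fn n y ≤ 1 := (hfn n y).2
      linarith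
  have hfg : f ≤ g := hsup.2 (by rintro a ⟨n, rfl⟩; exact hg n)
  have hle : f x ≤ ∑ n ∈ hS.toFinset, fn n x := by
    have h1 : f x ≤ g x := hfg x
    rw [hgapp, hφ0 (mem_singleton x)] at h1
    simpa using h1
  have hge : ∑ n ∈ hS.toFinset, fn n x ≤ f x := by
    by_cases h : ∀ n ∈ hS.toFinset, fn n x = 0
    · rw [Finset.sum_eq_zero h]; exact hf0
    · push_neg at h
      obtain ⟨m, hm, hmne⟩ := h
      have hsum : ∑ n ∈ hS.toFinset, fn n x = fn m x :=
        Finset.sum_eq_single_of_mem m hm (fun n _ hne =>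
          (mul_eq_zero.mp (hdisj n m hne x)).resolve_right hmne)
      rw [hsum]; exact hub m x
  linarith
end

section
/- Let K be a compact Hausdorff space, let p : K → K' be a continuous surjection onto a compact Hausdorff space K' such that p⁻¹ of every nowhere dense set is nowhere dense. Let (g_n)_{n∈ℕ} ⊆ C(K', [0,1]) be pairwise disjoint functions, and suppose g = ⋁_n g_n in C(K'). Then g ∘ p is the supremum of (g_n ∘ p)_{n∈ℕ} in the lattice C(K). -/
open Set

theorem stmt_11 (K K' : Type*) [TopologicalSpace K] [CompactSpace K] [T2Space K]
    [TopologicalSpace K'] [CompactSpace K'] [T2Space K']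
    (p : C(K, K')) (hps : Function.Surjective p)
    (hnd : ∀ N : Set K', IsNowhereDense N → IsNowhereDense (p ⁻¹' N))
    (g : C(K', ℝ)) (gn : ℕ → C(K', ℝ))
    (hg : ∀ x, g x ∈ Icc (0 : ℝ) 1)
    (hgn : ∀ n x, gn n x ∈ Icc (0 : ℝ) 1)
    (hdisj : ∀ n m, n ≠ m → ∀ x, gn n x * gn m x = 0)
    (hsup : IsLUB (Set.range gn) g) :
    IsLUB (Set.range fun n => (gn n).comp p) (g.comp p) := by
  classical
  -- the pointwise supremum
  set s : K' → ℝ := fun x => ⨆ n, gn n x with hs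
  have bdd : ∀ x : K', BddAbove (Set.range fun n => gn n x) := by
    intro x
    refine ⟨1, ?_⟩
    rintro _ ⟨n, rfl⟩
    exact (hgn n x).2
  have hle : ∀ n, gn n ≤ g := fun n => hsup.1 ⟨n, rfl⟩
  have hgns : ∀ n x, gn n x ≤ s x := fun n x => le_ciSup (bdd x) n
  -- For every ε > 0, the set {x | g x - s x ≥ ε} is closed with empty interior.
  have hGclosed : ∀ ε : ℝ, IsClosed {x : K' | g x - s x ≥ ε} := by
    intro ε
    have : {x : K' | g x - s x ≥ ε}ᶜ = ⋃ n, {x : K' | g x - ε < gn n x} := by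
      ext x
      simp only [mem_compl_iff, mem_setOf_eq, mem_iUnion, not_le]
      constructor
      · intro hx
        have : g x - ε < s x := by linarith
        exact (lt_ciSup_iff (bdd x)).1 this
      · rintro ⟨n, hn⟩
        have := hgns n x
        linarith
    rw [← isOpen_compl_iff, this]
    exact isOpen_iUnion fun n =>
      isOpen_lt (by continuity) (gn n).continuous
  have hGint : ∀ ε : ℝ, 0 < ε → interior {x : K' | g x - s x ≥ ε} = ∅ := by
    intro ε hε
    by_contra hne
    obtain ⟨x0, hx0⟩ := nonempty_iff_ne_empty.2 hne
    -- Urysohn: φ = 0 outside V := interior G, φ x0 = 1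
    have hVo : IsOpen (interior {x : K' | g x - s x ≥ ε}) := isOpen_interior
    obtain ⟨φ, hφ0, hφ1, hφicc⟩ :=
      exists_continuous_zero_one_of_isClosed
        (isClosed_compl_iff.2 hVo) (isClosed_singleton (x := x0))
        (by
          rw [Set.disjoint_left]
          rintro y hy rfl
          exact hy hx0)
    -- g - ε • φ is an upper bound of the gn
    have hub : g - ε • φ ∈ upperBounds (Set.range gn) := by
      rintro _ ⟨n, rfl⟩
      rw [ContinuousMap.le_def]
      intro x
      show gn n x ≤ (g - ε • φ) x
      simp only [ContinuousMap.sub_apply, ContinuousMap.smul_apply, smul_eq_mul]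
      by_cases hx : x ∈ interior {x : K' | g x - s x ≥ ε}
      · have hss : interior {x : K' | g x - s x ≥ ε} ⊆ {x : K' | g x - s x ≥ ε} :=
          interior_subset
        have h1 : g x - s x ≥ ε := hss hx
        have h2 : φ x ≤ 1 := (hφicc x).2
        have h3 := hgns n x
        have h0 : 0 ≤ φ x := (hφicc x).1
        nlinarith
      · have hφx : φ x = 0 := hφ0 hx
        have hgl : gn n x ≤ g x := ContinuousMap.le_def.1 (hle n) x
        simp only [ContinuousMap.sub_apply, ContinuousMap.smul_apply, smul_eq_mul, hφx]
        linarith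
    have := ContinuousMap.le_def.1 (hsup.2 hub) x0
    simp only [ContinuousMap.sub_apply, ContinuousMap.smul_apply, smul_eq_mul,
      hφ1 rfl, Pi.one_apply, mul_one] at this
    linarith
  constructor
  · rintro _ ⟨n, rfl⟩
    intro x
    exact hle n (p x)
  · rintro h hh
    have hub : ∀ n x, gn n (p x) ≤ h x := fun n x => hh ⟨n, rfl⟩ x
    -- dense open sets
    set U : ℕ → Set K := fun k => (p ⁻¹' {x : K' | g x - s x ≥ 1 / (k + 1)})ᶜ with hU
    have hUo : ∀ k, IsOpen (U k) :=
      fun k => ((hGclosed _).preimage p.continuous).isOpen_compl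
    have hUd : ∀ k, Dense (U k) := by
      intro k
      have hpos : (0 : ℝ) < 1 / (k + 1) := by positivity
      have hND : IsNowhereDense (p ⁻¹' {x : K' | g x - s x ≥ 1 / (k + 1)}) := by
        apply hnd
        exact (hGclosed _).isNowhereDense_iff.2 (hGint _ hpos)
      have hc : IsClosed (p ⁻¹' {x : K' | g x - s x ≥ 1 / (k + 1)}) :=
        (hGclosed _).preimage p.continuous
      have h2 := hc.isNowhereDense_iff.1 hND
      show Dense (⇑p ⁻¹' {x : K' | g x - s x ≥ 1 / (k + 1)})ᶜ
      rwa [← interior_eq_empty_iff_dense_compl]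
    have hdense : Dense (⋂ k, U k) := dense_iInter_of_isOpen_nat hUo hUd
    -- on the dense set, g (p x) ≤ s (p x) ≤ h x
    have hsub : (⋂ k, U k) ⊆ {x : K | g (p x) ≤ h x} := by
      intro x hx
      simp only [mem_setOf_eq]
      have h1 : g (p x) ≤ s (p x) := by
        by_contra hlt
        push_neg at hlt
        obtain ⟨k, hk⟩ := exists_nat_one_div_lt (by linarith : (0 : ℝ) < g (p x) - s (p x))
        have hmem := mem_iInter.1 hx k
        simp only [hU, mem_compl_iff, mem_preimage, mem_setOf_eq, not_le] at hmem
        have hk' : (1 : ℝ) / (k + 1) < g (p x) - s (p x) := by exact_mod_cast hk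
        linarith
      have h2 : s (p x) ≤ h x := ciSup_le fun n => hub n x
      linarith
    have hclosed : IsClosed {x : K | g (p x) ≤ h x} :=
      isClosed_le (by continuity) h.continuous
    have hall : ∀ x : K, g (p x) ≤ h x := by
      have hd2 : Dense {x : K | g (p x) ≤ h x} := hdense.mono hsub
      have hcu : closure {x : K | g (p x) ≤ h x} = univ := hd2.closure_eq
      rw [hclosed.closure_eq] at hcu
      intro x
      have : x ∈ {x : K | g (p x) ≤ h x} := hcu ▸ mem_univ x
      exact this
    rw [ContinuousMap.le_def]
    exact fun x => hall x
end

section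
/- Let K be a compact Hausdorff space with a countable basis of open sets and let (U_n)_{n∈ℕ} be a sequence of pairwise disjoint nonempty open subsets of K. Then there exists M ⊆ ℕ such that closure(⋃_{n∈M} U_n) ∩ closure(⋃_{n∈ℕ\M} U_n) ≠ ∅. -/
/-- In a second countable compact Hausdorff space, for any sequence of pairwise
disjoint nonempty open sets there is `M ⊆ ℕ` along which the sequence is not
separated. -/
theorem stmt_13 (K : Type*) [TopologicalSpace K] [CompactSpace K] [T2Space K]
    [SecondCountableTopology K]
    (U : ℕ → Set K) (hUopen : ∀ n, IsOpen (U n)) (hUne : ∀ n, (U n).Nonempty)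
    (hdisj : ∀ n m, n ≠ m → Disjoint (U n) (U m)) :
    ∃ M : Set ℕ,
      (closure (⋃ n ∈ M, U n) ∩ closure (⋃ n ∈ Mᶜ, U n)).Nonempty := by
  choose x hx using hUne
  obtain ⟨a, -, φ, hφ, ha⟩ :=
    (isCompact_univ (X := K)).isSeqCompact (x := x) (fun n => Set.mem_univ _)
  have heven : StrictMono (fun k => 2 * k) := fun i j h => by simpa using by omega
  have hodd : StrictMono (fun k => 2 * k + 1) := fun i j h => by simpa using by omega
  refine ⟨Set.range (fun k => φ (2 * k)), a, ?_, ?_⟩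
  · refine mem_closure_of_tendsto (ha.comp heven.tendsto_atTop)
      (Filter.Eventually.of_forall fun k => ?_)
    exact Set.mem_biUnion ⟨k, rfl⟩ (hx _)
  · refine mem_closure_of_tendsto (ha.comp hodd.tendsto_atTop)
      (Filter.Eventually.of_forall fun k => ?_)
    refine Set.mem_biUnion ?_ (hx _)
    rintro ⟨j, hj⟩
    have := hφ.injective hj
    simp only at this
    omega
end

section
/- Let K be a compact Hausdorff space, (V_n)_{n∈ℕ} pairwise disjoint open subsets, (x_n)_{n∈ℕ} distinct points with x_n ∉ V_n for all n, ε > 0, and (μ_n)_{n∈ℕ} Radon (regular Borel) measures on K with |μ_n|(V_n) > ε for all n. Then there exist an infinite M ⊆ ℕ, open sets V'_n ⊆ V_n for n ∈ M, and δ > 0 such that |μ_n|(V'_n) > δ for all n ∈ M and closure(⋃_{n∈M} V'_n) ∩ {x_n : n ∈ M} = ∅. -/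
/-!
Shrink each `V n` to a compact `F n` with `|μₙ|(F n) > ε` and take an Urysohn function `f n`,
equal to `1` on `F n` and `0` off `V n`; together with countably many functions separating the
points `x n` they define a continuous map `Φ` from `K` into a metrizable countable product,
injective on the `x n`. The push-forward `νₙ` of `|μₙ|` restricted to `F n` has no atom at `Φ z`
when `z ∉ V n`, which by disjointness holds for all but one `n`. So everything reduces to
measures `νₙ` on a metric space, with points `pₙ = Φ (x n)` clustering at some `q = Φ z`.
Either infinitely many `νₙ` give mass `≤ ε/2` to a ball `B̄(q, r)` containing `pₙ`, and the
complement of that ball serves for all of them; or the masses concentrate at `q`, and one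
chooses inductively pairwise disjoint annuli around `q`, each carrying mass `> ε/2` of some `νₙ`
and containing `pₙ`. Cutting off small balls around `q` and `pₙ`, of mass `< ε/8` each since
`νₙ` has no atoms there, leaves open sets of mass `> ε/4`; a neighbourhood of `pₙ` inside its
annulus meets none of them.
-/

open MeasureTheory Set Metric Filter Topology Function

theorem ofReal_lt_measure_sdiff {α : Type*} [MeasurableSpace α] {m : Measure α} {s t : Set α}
    {a b : ℝ} (ha : 0 ≤ a) (hb : 0 ≤ b) (hs : ENNReal.ofReal (a + b) < m s)
    (ht : m t ≤ ENNReal.ofReal b) : ENNReal.ofReal a < m (s \ t) := by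
  refine (ENNReal.add_lt_add_iff_right (ENNReal.ofReal_ne_top (r := b))).mp ?_
  calc ENNReal.ofReal a + ENNReal.ofReal b = ENNReal.ofReal (a + b) :=
        (ENNReal.ofReal_add ha hb).symm
    _ < m s := hs
    _ ≤ m (s \ t) + m t := tsub_le_iff_right.mp le_measure_sdiff
    _ ≤ m (s \ t) + ENNReal.ofReal b := by gcongr

theorem exists_pos_lt_measure_closedBall_lt {Y : Type*} [MetricSpace Y] [MeasurableSpace Y]
    [OpensMeasurableSpace Y] (ν : Measure Y) [IsFiniteMeasure ν] {y : Y} (hy : ν {y} = 0)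
    {η : ENNReal} (hη : 0 < η) {c : ℝ} (hc : 0 < c) :
    ∃ r, 0 < r ∧ r < c ∧ ν (closedBall y r) < η := by
  have hlim := tendsto_measure_cthickening_of_isClosed (μ := ν) ⟨1, one_pos, measure_ne_top _ _⟩
    (isClosed_singleton (x := y))
  rw [hy] at hlim
  obtain ⟨r, hr, ⟨hr0, hrc⟩⟩ :=
    ((hlim.eventually_lt_const hη).filter_mono nhdsWithin_le_nhds |>.and (Ioo_mem_nhdsGT hc)).exists
  exact ⟨r, hr0, hrc, (measure_mono (closedBall_subset_cthickening_singleton y r)).trans_lt hr⟩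

def HasSeparatedCharges {ι Y : Type*} [TopologicalSpace Y] [MeasurableSpace Y]
    (ν : ι → Measure Y) (p : ι → Y) : Prop :=
  ∃ (M : Set ι) (U : ι → Set Y) (δ : ℝ), M.Infinite ∧ 0 < δ ∧
    (∀ i ∈ M, IsOpen (U i) ∧ ENNReal.ofReal δ < ν i (U i)) ∧
    ∀ i ∈ M, p i ∉ closure (⋃ j ∈ M, U j)

theorem hasSeparatedCharges_of_seq {ι Y : Type*} [TopologicalSpace Y] [MeasurableSpace Y]
    {ν : ι → Measure Y} {p : ι → Y} {n : ℕ → ι} (hn : Injective n) {U : ℕ → Set Y} {δ : ℝ}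
    (hδ : 0 < δ) (hU : ∀ j, IsOpen (U j) ∧ ENNReal.ofReal δ < ν (n j) (U j))
    (hsep : ∀ j, p (n j) ∉ closure (⋃ k, U k)) : HasSeparatedCharges ν p := by
  refine ⟨range n, fun i => U (invFun n i), δ, infinite_range_of_injective hn, hδ, ?_, ?_⟩
  · rintro _ ⟨j, rfl⟩
    simpa only [leftInverse_invFun hn j] using hU j
  · rintro _ ⟨j, rfl⟩
    simpa only [biUnion_range, leftInverse_invFun hn _] using hsep j

section MetricSpace

variable {ι Y : Type*} [MetricSpace Y] [MeasurableSpace Y]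
  {ν : ι → Measure Y} {p : ι → Y} {q : Y} {ε : ℝ}

theorem hasSeparatedCharges_of_frequently_measure_closedBall_le (hε : 0 < ε)
    (hν : ∀ i, ENNReal.ofReal ε < ν i univ) {r : ℝ}
    (h : ∃ᶠ i in cofinite, dist (p i) q < r ∧ ν i (closedBall q r) ≤ ENNReal.ofReal (ε / 2)) :
    HasSeparatedCharges ν p := by
  set M := {i | dist (p i) q < r ∧ ν i (closedBall q r) ≤ ENNReal.ofReal (ε / 2)}
  have hdisj : Disjoint (ball q r) (⋃ j ∈ M, (closedBall q r)ᶜ) := disjoint_iUnion₂_right.mpr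
    fun _ _ => disjoint_compl_right_iff_subset.mpr ball_subset_closedBall
  refine ⟨M, fun _ => (closedBall q r)ᶜ, ε / 2, frequently_cofinite_iff_infinite.mp h,
    half_pos hε, fun i hi => ⟨isClosed_closedBall.isOpen_compl, ?_⟩,
    fun i hi => (hdisj.closure_right isOpen_ball).notMem_of_mem_left hi.1⟩
  rw [compl_eq_univ_sdiff]
  exact ofReal_lt_measure_sdiff (half_pos hε).le (half_pos hε).le
    (by rw [add_halves]; exact hν i) hi.2

theorem exists_seq_nested_annuli [OpensMeasurableSpace Y] [∀ i, IsFiniteMeasure (ν i)] (hε : 0 < ε)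
    (h : ∀ R > 0, ∃ᶠ i in cofinite, dist (p i) q < R ∧ p i ≠ q ∧ ν i {q} = 0 ∧
      ENNReal.ofReal (ε / 2) < ν i (ball q R)) :
    ∃ (n : ℕ → ι) (R r : ℕ → ℝ), (∀ j, p (n j) ∈ ball q (R j) \ closedBall q (r j)) ∧
      (∀ j, ENNReal.ofReal (ε / 2) < ν (n j) (ball q (R j))) ∧
      (∀ j, ν (n j) (closedBall q (r j)) < ENNReal.ofReal (ε / 8)) ∧
      ∀ j k, j < k → R k ≤ r j := by
  let P : ι × ℝ × ℝ → Prop := fun e => 0 < e.2.2 ∧ p e.1 ∈ ball q e.2.1 \ closedBall q e.2.2 ∧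
    ENNReal.ofReal (ε / 2) < ν e.1 (ball q e.2.1) ∧
    ν e.1 (closedBall q e.2.2) < ENNReal.ofReal (ε / 8)
  obtain ⟨e, hP, hnest⟩ := exists_seq_of_forall_finset_exists P (fun e e' => e'.2.1 ≤ e.2.2)
      fun s hs => by
    obtain ⟨R, hRs, hR⟩ : ∃ R, (∀ e ∈ s, R ≤ e.2.2) ∧ 0 < R :=
      (((s.eventually_all.mpr fun e he => (eventually_lt_nhds (hs e he).1).mono fun _ => le_of_lt)
        |>.filter_mono nhdsWithin_le_nhds).and (self_mem_nhdsWithin (s := Ioi 0))).exists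
    obtain ⟨i, hiR, hiq, hνq, hmass⟩ := (h R hR).exists
    obtain ⟨r, hr0, hr, hνr⟩ := exists_pos_lt_measure_closedBall_lt (ν i) hνq
      (ENNReal.ofReal_pos.mpr (by positivity : 0 < ε / 8)) (dist_pos.mpr hiq)
    exact ⟨(i, R, r), ⟨hr0, ⟨hiR, not_le.mpr hr⟩, hmass, hνr⟩, hRs⟩
  exact ⟨fun j => (e j).1, fun j => (e j).2.1, fun j => (e j).2.2, fun j => (hP j).2.1,
    fun j => (hP j).2.2.1, fun j => (hP j).2.2.2, hnest⟩

theorem hasSeparatedCharges_of_frequently_lt_measure_ball [OpensMeasurableSpace Y]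
    [∀ i, IsFiniteMeasure (ν i)] (hε : 0 < ε) (hνp : ∀ i, ν i {p i} = 0)
    (h : ∀ R > 0, ∃ᶠ i in cofinite, dist (p i) q < R ∧ p i ≠ q ∧ ν i {q} = 0 ∧
      ENNReal.ofReal (ε / 2) < ν i (ball q R)) :
    HasSeparatedCharges ν p := by
  obtain ⟨n, R, r, hpn, hR, hr, hnest⟩ := exists_seq_nested_annuli hε h
  choose ρ hρ0 _ hρ using fun j => exists_pos_lt_measure_closedBall_lt (ν (n j)) (hνp (n j))
    (ENNReal.ofReal_pos.mpr (by positivity : 0 < ε / 8)) one_pos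
  set A : ℕ → Set Y := fun j => ball q (R j) \ closedBall q (r j)
  have hA : Pairwise (Disjoint on A) := by
    have hlt : ∀ j k, j < k → Disjoint (A j) (A k) := fun j k hjk => disjoint_left.mpr
      fun y hyj hyk => hyj.2 <|
        closedBall_subset_closedBall (hnest j k hjk) (ball_subset_closedBall hyk.1)
    intro j k hjk
    rcases hjk.lt_or_gt with h | h
    exacts [hlt j k h, (hlt k j h).symm]
  have hn : Injective n := fun j k hjk => by
    by_contra hne
    exact (hA hne).ne_of_mem (hpn j) (hjk ▸ hpn k) rfl
  set U : ℕ → Set Y := fun j => A j \ closedBall (p (n j)) (ρ j)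
  have hU : ∀ j, ENNReal.ofReal (ε / 4) < ν (n j) (U j) := by
    intro j
    rw [show U j = ball q (R j) \ (closedBall q (r j) ∪ closedBall (p (n j)) (ρ j)) from
      sdiff_sdiff]
    refine ofReal_lt_measure_sdiff (a := ε / 4) (b := ε / 4) (by positivity) (by positivity)
      (by rw [show ε / 4 + ε / 4 = ε / 2 by ring]; exact hR j) ?_
    calc ν (n j) (closedBall q (r j) ∪ closedBall (p (n j)) (ρ j))
        ≤ ν (n j) (closedBall q (r j)) + ν (n j) (closedBall (p (n j)) (ρ j)) :=
          measure_union_le _ _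
      _ ≤ ENNReal.ofReal (ε / 8) + ENNReal.ofReal (ε / 8) := add_le_add (hr j).le (hρ j).le
      _ = ENNReal.ofReal (ε / 4) := by
          rw [← ENNReal.ofReal_add (by positivity) (by positivity)]
          ring_nf
  have hsep : ∀ j, p (n j) ∉ closure (⋃ k, U k) := by
    intro j
    have hdisj : Disjoint (A j ∩ ball (p (n j)) (ρ j)) (⋃ k, U k) :=
      disjoint_iUnion_right.mpr fun k => by
        rcases eq_or_ne j k with rfl | hjk
        · exact disjoint_left.mpr fun y hy hyU => hyU.2 (ball_subset_closedBall hy.2)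
        · exact (hA hjk).mono inter_subset_left sdiff_subset
    have hopen : IsOpen (A j ∩ ball (p (n j)) (ρ j)) :=
      (isOpen_ball.sdiff isClosed_closedBall).inter isOpen_ball
    exact (hdisj.closure_right hopen).notMem_of_mem_left ⟨hpn j, mem_ball_self (hρ0 j)⟩
  exact hasSeparatedCharges_of_seq hn (by positivity)
    (fun j => ⟨(isOpen_ball.sdiff isClosed_closedBall).sdiff isClosed_closedBall, hU j⟩) hsep

theorem hasSeparatedCharges_of_mapClusterPt [OpensMeasurableSpace Y] [∀ i, IsFiniteMeasure (ν i)]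
    (hq : MapClusterPt q cofinite p) (hpq : ∀ᶠ i in cofinite, p i ≠ q)
    (hνq : ∀ᶠ i in cofinite, ν i {q} = 0) (hνp : ∀ i, ν i {p i} = 0) (hε : 0 < ε)
    (hν : ∀ i, ENNReal.ofReal ε < ν i univ) :
    HasSeparatedCharges ν p := by
  by_cases h : ∃ r, ∃ᶠ i in cofinite, dist (p i) q < r ∧
    ν i (closedBall q r) ≤ ENNReal.ofReal (ε / 2)
  · obtain ⟨r, hr⟩ := h
    exact hasSeparatedCharges_of_frequently_measure_closedBall_le hε hν hr
  push Not at h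
  refine hasSeparatedCharges_of_frequently_lt_measure_ball (q := q) hε hνp fun R hR => ?_
  refine ((hq.frequently (ball_mem_nhds q (half_pos hR))).and_eventually
    ((h (R / 2)).and (hpq.and hνq))).mono ?_
  rintro i ⟨hi, hmass, hne, hi0⟩
  exact ⟨(mem_ball.mp hi).trans (half_lt_self hR), hne, hi0,
    (hmass hi).trans_le (measure_mono (closedBall_subset_ball (half_lt_self hR)))⟩

end MetricSpace

theorem eventually_cofinite_notMem_of_pairwise_disjoint {ι α : Type*} {V : ι → Set α}
    (hV : Pairwise (Disjoint on V)) (z : α) : ∀ᶠ i in cofinite, z ∉ V i :=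
  eventually_cofinite.mpr <| Set.Subsingleton.finite fun _ hi _ hj => by_contra fun hij =>
    disjoint_left.mp (hV hij) (not_not.mp hi) (not_not.mp hj)

theorem map_restrict_singleton_eq_zero {α β : Type*} [MeasurableSpace α] [MeasurableSpace β]
    [MeasurableSingletonClass β] {Φ : α → β} (hΦ : Measurable Φ) {m : Measure α} {F : Set α}
    {y : β} (hy : ∀ w ∈ F, Φ w ≠ y) : (m.restrict F).map Φ {y} = 0 := by
  rw [Measure.map_apply hΦ (measurableSet_singleton y),
    Measure.restrict_apply (hΦ (measurableSet_singleton y)),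
    show Φ ⁻¹' {y} ∩ F = ∅ from eq_empty_iff_forall_notMem.mpr fun w hw => hy w hw.2 hw.1,
    measure_empty]

theorem HasSeparatedCharges.preimage {ι K Y : Type*} [TopologicalSpace K] [MeasurableSpace K]
    [TopologicalSpace Y] [MeasurableSpace Y] [OpensMeasurableSpace Y] {Φ : K → Y}
    (hΦ : Continuous Φ) (hΦm : Measurable Φ) {m : ι → Measure K} {F V : ι → Set K}
    {x : ι → K} (h : HasSeparatedCharges (fun i => ((m i).restrict (F i)).map Φ) (Φ ∘ x))
    (hV : ∀ i, IsOpen (V i)) (hFV : ∀ i, F i ⊆ V i) :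
    ∃ (M : Set ι) (V' : ι → Set K) (δ : ℝ), M.Infinite ∧ 0 < δ ∧
      (∀ i ∈ M, IsOpen (V' i) ∧ V' i ⊆ V i ∧ ENNReal.ofReal δ < m i (V' i)) ∧
      closure (⋃ i ∈ M, V' i) ∩ {y | ∃ i ∈ M, y = x i} = ∅ := by
  obtain ⟨M, U, δ, hM, hδ, hU, hsep⟩ := h
  refine ⟨M, fun i => Φ ⁻¹' U i ∩ V i, δ, hM, hδ, fun i hi =>
    ⟨((hU i hi).1.preimage hΦ).inter (hV i), inter_subset_right, ?_⟩, ?_⟩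
  · calc ENNReal.ofReal δ < ((m i).restrict (F i)).map Φ (U i) := (hU i hi).2
      _ = m i (Φ ⁻¹' U i ∩ F i) := by
        rw [Measure.map_apply hΦm (hU i hi).1.measurableSet,
          Measure.restrict_apply (hΦm (hU i hi).1.measurableSet)]
      _ ≤ m i (Φ ⁻¹' U i ∩ V i) := measure_mono (inter_subset_inter_right _ (hFV i))
  · refine eq_empty_iff_forall_notMem.mpr ?_
    rintro _ ⟨hy, i, hi, rfl⟩
    refine hsep i hi (hΦ.closure_preimage_subset _ (closure_mono ?_ hy))
    simp only [preimage_iUnion₂]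
    exact iUnion₂_mono fun j _ => inter_subset_left

theorem exists_continuous_injective_comp {K ι : Type*} [TopologicalSpace K] [T35Space K]
    {x : ι → K} (hx : Injective x) : ∃ G : K → (ι × ι → ℝ), Continuous G ∧ Injective (G ∘ x) := by
  have hsep : ∀ e : ι × ι, ∃ g : K → ℝ, Continuous g ∧ (e.1 ≠ e.2 → g (x e.1) ≠ g (x e.2)) := by
    rintro ⟨i, j⟩
    by_cases hij : i = j
    · exact ⟨0, continuous_const, fun h => (h hij).elim⟩
    · obtain ⟨g, hg, hne⟩ := separatesPoints_continuous_of_t35Space (hx.ne hij)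
      exact ⟨g, hg, fun _ => hne⟩
  choose g hg hne using hsep
  exact ⟨fun z e => g e z, continuous_pi hg, fun i j hij =>
    by_contra fun h => hne (i, j) h (congrFun hij (i, j))⟩

/-- Extraction lemma for sequences of signed Radon measures charging disjoint
open sets. -/
theorem stmt_14 (K : Type*) [TopologicalSpace K] [CompactSpace K] [T2Space K]
    [MeasurableSpace K] [BorelSpace K]
    (V : ℕ → Set K) (hVopen : ∀ n, IsOpen (V n))
    (hVdisj : ∀ n m, n ≠ m → Disjoint (V n) (V m))
    (x : ℕ → K) (hxinj : Function.Injective x) (hx : ∀ n, x n ∉ V n)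
    (μ : ℕ → SignedMeasure K) (hreg : ∀ n, (μ n).totalVariation.Regular)
    (ε : ℝ) (hε : 0 < ε)
    (hbig : ∀ n, ENNReal.ofReal ε < (μ n).totalVariation (V n)) :
    ∃ (M : Set ℕ) (V' : ℕ → Set K) (δ : ℝ), M.Infinite ∧ 0 < δ ∧
      (∀ n ∈ M, IsOpen (V' n) ∧ V' n ⊆ V n ∧
        ENNReal.ofReal δ < (μ n).totalVariation (V' n)) ∧
      closure (⋃ n ∈ M, V' n) ∩ {y | ∃ n ∈ M, y = x n} = ∅ := by
  choose F hFV hFc hFm using fun n => (hreg n).innerRegular (hVopen n) _ (hbig n)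
  choose f hf0 hf1 _ using fun n => exists_continuous_zero_one_of_isClosed
    (hVopen n).isClosed_compl (hFc n).isClosed (disjoint_compl_left_iff_subset.mpr (hFV n))
  obtain ⟨G, hG, hGx⟩ := exists_continuous_injective_comp hxinj
  let _ : MetricSpace ((ℕ → ℝ) × (ℕ × ℕ → ℝ)) := TopologicalSpace.metrizableSpaceMetric _
  set Φ : K → (ℕ → ℝ) × (ℕ × ℕ → ℝ) := fun z => (fun n => f n z, G z)
  have hΦ : Continuous Φ := (continuous_pi fun n => (f n).continuous).prodMk hG
  have hΦx : Injective (Φ ∘ x) := fun i j h => hGx (congrArg Prod.snd h)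
  have hatom : ∀ n z, z ∉ V n → ((μ n).totalVariation.restrict (F n)).map Φ {Φ z} = 0 :=
    fun n z hz => map_restrict_singleton_eq_zero hΦ.measurable fun w hw hwz => by
      simpa [Φ, hf1 n hw, hf0 n hz] using congrFun (congrArg Prod.fst hwz) n
  obtain ⟨_, ⟨z, rfl⟩, hz⟩ := (isCompact_range hΦ).exists_mapClusterPt (f := cofinite)
    (u := Φ ∘ x) (tendsto_principal.mpr (.of_forall fun n => mem_range_self (x n)))
  refine HasSeparatedCharges.preimage hΦ hΦ.measurable ?_ hVopen hFV
  refine hasSeparatedCharges_of_mapClusterPt hz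
    (hΦx.tendsto_cofinite.eventually (eventually_cofinite_ne _))
    ((eventually_cofinite_notMem_of_pairwise_disjoint hVdisj z).mono fun n => hatom n z)
    (fun n => hatom n (x n) (hx n)) hε fun n => ?_
  rw [Measure.map_apply hΦ.measurable MeasurableSet.univ, preimage_univ,
    Measure.restrict_apply_univ]
  exact hFm n
end

section
/- Let K be a connected compact Hausdorff space and let (f_n)_{n∈ℕ} ⊆ C(K, [0,1]) be pairwise disjoint. Let D = ⋃{ U open : {n : U ∩ supp(f_n) ≠ ∅} finite }, and let E ⊆ K × [0,1] be the closure of the graph of (Σ_n f_n)↾D. If E contains the graph of Σ_n f_n (the extension is strong), then E is compact and connected. -/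
open Set Filter Topology

section AuxLemmas

variable {K : Type*} [TopologicalSpace K]

/-- In a compact Hausdorff space, if the connected component of `w` inside `closure O`
(`O` open, `w ∈ O`) stays inside `O`, then there is a clopen set trapped between. -/
private lemma clopen_sandwich [CompactSpace K] [T2Space K]
    (O : Set K) (hO : IsOpen O) (w : K) (hw : w ∈ O)
    (hcomp : connectedComponentIn (closure O) w ⊆ O) :
    ∃ W : Set K, IsClopen W ∧ w ∈ W ∧ W ⊆ O := by
  set F : Set K := closure O with hF
  have hFc : IsClosed F := isClosed_closure
  have hwF : w ∈ F := subset_closure hw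
  haveI : CompactSpace F := isCompact_iff_compactSpace.mp hFc.isCompact
  set w' : F := ⟨w, hwF⟩ with hw'
  set O' : Set F := Subtype.val ⁻¹' O with hO'
  have hO'o : IsOpen O' := hO.preimage continuous_subtype_val
  have hsub : connectedComponent w' ⊆ O' := by
    intro z hz
    have hzK : (z : K) ∈ connectedComponentIn F w := by
      rw [connectedComponentIn_eq_image hwF]
      exact mem_image_of_mem _ hz
    exact hcomp hzK
  have hcc := connectedComponent_eq_iInter_isClopen w'
  have hempty : (O'ᶜ ∩ ⋂ s : { s : Set F // IsClopen s ∧ w' ∈ s }, ↑s) = ∅ := by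
    rw [← hcc]
    apply eq_empty_of_forall_notMem
    rintro z ⟨hz1, hz2⟩
    exact hz1 (hsub hz2)
  obtain ⟨t, ht⟩ := (hO'o.isClosed_compl.isCompact).elim_finite_subfamily_closed
    (fun s : { s : Set F // IsClopen s ∧ w' ∈ s } => (s : Set F))
    (fun s => s.2.1.1) hempty
  set W' : Set F := ⋂ s ∈ t, (s : Set F) with hW'
  have hW'clopen : IsClopen W' := isClopen_biInter_finset (fun s _ => s.2.1)
  have hwW' : w' ∈ W' := mem_iInter₂.mpr fun s _ => s.2.2
  have hW'O' : W' ⊆ O' := by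
    intro z hz
    by_contra hzO
    have hzmem : z ∈ O'ᶜ ∩ ⋂ s ∈ t, ((s : { s : Set F // IsClopen s ∧ w' ∈ s }) : Set F) :=
      ⟨hzO, hz⟩
    rw [ht] at hzmem
    exact hzmem
  obtain ⟨G, hGo, hGeq⟩ := isOpen_induced_iff.mp hW'clopen.2
  have himg : Subtype.val '' W' = G ∩ O := by
    apply Subset.antisymm
    · rintro _ ⟨z, hz, rfl⟩
      refine ⟨?_, hW'O' hz⟩
      have : z ∈ Subtype.val ⁻¹' G := by rw [hGeq]; exact hz
      exact this
    · rintro u ⟨huG, huO⟩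
      have huF : u ∈ F := subset_closure huO
      refine ⟨⟨u, huF⟩, ?_, rfl⟩
      rw [← hGeq]; exact huG
  refine ⟨Subtype.val '' W', ⟨?_, ?_⟩, ⟨w', hwW', rfl⟩, ?_⟩
  · exact ((hW'clopen.1.isCompact).image continuous_subtype_val).isClosed
  · rw [himg]; exact hGo.inter hO
  · rintro _ ⟨z, hz, rfl⟩; exact hW'O' hz

private def limSet (𝒰 : Ultrafilter K) (W₀ : Set K) (C : K → Set K) : Set K :=
  ⋂ S : {S : Set K // S ∈ 𝒰}, closure (⋃ w ∈ (S : Set K) ∩ W₀, C w)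

private lemma limSet_isClosed (𝒰 : Ultrafilter K) (W₀ : Set K) (C : K → Set K) :
    IsClosed (limSet 𝒰 W₀ C) :=
  isClosed_iInter fun _ => isClosed_closure

private lemma mem_limSet {𝒰 : Ultrafilter K} {W₀ : Set K} {C : K → Set K} {p : K}
    (h : ∀ O : Set K, IsOpen O → p ∈ O → ∀ S ∈ 𝒰, ∃ w, w ∈ S ∩ W₀ ∧ ∃ z ∈ C w, z ∈ O) :
    p ∈ limSet 𝒰 W₀ C := by
  refine mem_iInter.2 fun S => ?_
  rw [mem_closure_iff]
  intro O hO hpO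
  obtain ⟨w, hw, z, hz, hzO⟩ := h O hO hpO S S.2
  exact ⟨z, hzO, mem_biUnion hw hz⟩

private lemma limSet_subset {𝒰 : Ultrafilter K} {W₀ : Set K} {C : K → Set K}
    {S : Set K} (hS : S ∈ 𝒰) {F : Set K} (hF : IsClosed F)
    (h : ∀ w ∈ S ∩ W₀, C w ⊆ F) : limSet 𝒰 W₀ C ⊆ F := by
  intro z hz
  have hz' := mem_iInter.1 hz ⟨S, hS⟩
  exact closure_minimal (iUnion₂_subset h) hF hz'

private lemma limSet_preconnected [CompactSpace K] [T2Space K]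
    {𝒰 : Ultrafilter K} {W₀ : Set K} (hW₀ : W₀ ∈ 𝒰) {C : K → Set K}
    (hCpre : ∀ w, IsPreconnected (C w)) (hself : ∀ w, w ∈ C w) :
    IsPreconnected (limSet 𝒰 W₀ C) := by
  classical
  set L : Set K := limSet 𝒰 W₀ C with hLdef
  have hLcl : IsClosed L := limSet_isClosed 𝒰 W₀ C
  intro G H hGo hHo hcovL hneG hneH
  by_contra hne
  rw [Set.not_nonempty_iff_eq_empty] at hne
  obtain ⟨a, haL, haG⟩ := hneG
  obtain ⟨b, hbL, hbH⟩ := hneH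
  have hPeq : L ∩ G = L \ H := by
    ext z
    constructor
    · rintro ⟨hzL, hzG⟩
      refine ⟨hzL, fun hzH => ?_⟩
      have : z ∈ L ∩ (G ∩ H) := ⟨hzL, hzG, hzH⟩
      rw [hne] at this; exact this
    · rintro ⟨hzL, hzH⟩
      exact ⟨hzL, (hcovL hzL).resolve_right hzH⟩
  have hQeq : L ∩ H = L \ G := by
    ext z
    constructor
    · rintro ⟨hzL, hzH⟩
      refine ⟨hzL, fun hzG => ?_⟩
      have : z ∈ L ∩ (G ∩ H) := ⟨hzL, hzG, hzH⟩
      rw [hne] at this; exact this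
    · rintro ⟨hzL, hzG⟩
      exact ⟨hzL, (hcovL hzL).resolve_left hzG⟩
  have hPc : IsClosed (L ∩ G) := by rw [hPeq]; exact hLcl.sdiff hHo
  have hQc : IsClosed (L ∩ H) := by rw [hQeq]; exact hLcl.sdiff hGo
  have hPQdisj : Disjoint (L ∩ G) (L ∩ H) := by
    rw [Set.disjoint_left]
    rintro z ⟨hzL, hzG⟩ ⟨-, hzH⟩
    have hmem : z ∈ L ∩ (G ∩ H) := ⟨hzL, hzG, hzH⟩
    rw [hne] at hmem
    exact hmem
  obtain ⟨G', H', hG'o, hH'o, hPG', hQH', hdisjGH⟩ :=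
    SeparatedNhds.of_isCompact_isCompact hPc.isCompact hQc.isCompact hPQdisj
  have hLsub' : L ⊆ G' ∪ H' := by
    intro z hz
    rcases hcovL hz with h | h
    · exact Or.inl (hPG' ⟨hz, h⟩)
    · exact Or.inr (hQH' ⟨hz, h⟩)
  set T : Set K := {w | w ∈ W₀ → C w ⊆ G' ∪ H'} with hT
  have hTmem : T ∈ 𝒰 := by
    by_contra hTn
    have hTc : Tᶜ ∈ 𝒰 := Ultrafilter.compl_mem_iff_notMem.mpr hTn
    have hpt : ∀ w, ∃ z, z ∈ C w ∧ (w ∈ Tᶜ ∩ W₀ → z ∉ G' ∪ H') := by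
      intro w
      by_cases h : w ∈ Tᶜ ∧ w ∈ W₀
      · have hns : ¬ C w ⊆ G' ∪ H' := fun hsub => h.1 (fun _ => hsub)
        obtain ⟨z, hz1, hz2⟩ := not_subset.mp hns
        exact ⟨z, hz1, fun _ => hz2⟩
      · exact ⟨w, hself w, fun hmem => absurd ⟨hmem.1, hmem.2⟩ h⟩
    set p : K → K := fun w => (hpt w).choose with hp
    obtain ⟨pstar, -, hpstar⟩ := isCompact_univ.ultrafilter_le_nhds (𝒰.map p)
      (by rw [le_principal_iff]; exact univ_mem)
    have hpstarL : pstar ∈ L := by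
      apply mem_limSet
      intro O hO hpO S hS
      have hOmem : p ⁻¹' O ∈ 𝒰 :=
        Ultrafilter.mem_map.mp (hpstar (hO.mem_nhds hpO))
      have : (p ⁻¹' O ∩ Tᶜ) ∩ (S ∩ W₀) ∈ 𝒰 :=
        inter_mem (inter_mem hOmem hTc) (inter_mem hS hW₀)
      obtain ⟨w, ⟨hwO, hwT⟩, hwS⟩ := (𝒰 : Filter K).nonempty_of_mem this
      exact ⟨w, hwS, p w, (hpt w).choose_spec.1, hwO⟩
    have hpstarOut : pstar ∉ G' ∪ H' := by
      have hmem : (G' ∪ H')ᶜ ∈ 𝒰.map p := by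
        have hsub2 : Tᶜ ∩ W₀ ⊆ p ⁻¹' (G' ∪ H')ᶜ := by
          intro w hw
          exact (hpt w).choose_spec.2 hw
        rw [Ultrafilter.mem_map]
        exact Filter.mem_of_superset (inter_mem hTc hW₀) hsub2
      have : pstar ∈ closure ((G' ∪ H')ᶜ) :=
        mem_closure_iff_ultrafilter.mpr ⟨𝒰.map p, hmem, hpstar⟩
      rwa [IsClosed.closure_eq (by exact (hG'o.union hH'o).isClosed_compl)] at this
    exact hpstarOut (hLsub' hpstarL)
  have hsplit : T ∩ W₀ ⊆ {w | C w ⊆ G'} ∪ {w | C w ⊆ H'} := by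
    rintro w ⟨hwT, hwW⟩
    exact IsPreconnected.subset_or_subset hG'o hH'o hdisjGH (hwT hwW) (hCpre w)
  have hor : {w | C w ⊆ G'} ∈ 𝒰 ∨ {w | C w ⊆ H'} ∈ 𝒰 := by
    rw [← Ultrafilter.union_mem_iff]
    exact Filter.mem_of_superset (inter_mem hTmem hW₀) hsplit
  rcases hor with hmem | hmem
  · have hLG' : L ⊆ closure G' :=
      (limSet_subset hmem isClosed_closure (fun w hw => (hw.1).trans subset_closure))
    have hbH' : b ∈ H' := hQH' ⟨hbL, hbH⟩
    obtain ⟨c, hc1, hc2⟩ := mem_closure_iff.mp (hLG' hbL) H' hH'o hbH'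
    exact (Set.disjoint_left.mp hdisjGH hc2) hc1
  · have hLH' : L ⊆ closure H' :=
      (limSet_subset hmem isClosed_closure (fun w hw => (hw.1).trans subset_closure))
    have haG' : a ∈ G' := hPG' ⟨haL, haG⟩
    obtain ⟨c, hc1, hc2⟩ := mem_closure_iff.mp (hLH' haL) G' hG'o haG'
    exact (Set.disjoint_left.mp hdisjGH hc1) hc2

end AuxLemmas

/-- A strong extension of a connected compact Hausdorff space by a pairwise
disjoint sequence of functions is compact and connected. -/
theorem stmt_15 (K : Type*) [TopologicalSpace K] [CompactSpace K] [T2Space K]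
    [ConnectedSpace K]
    (fn : ℕ → C(K, ℝ))
    (hfn : ∀ n x, fn n x ∈ Icc (0 : ℝ) 1)
    (hdisj : ∀ n m, n ≠ m → ∀ x, fn n x * fn m x = 0)
    (D : Set K)
    (hD : D = ⋃₀ {U : Set K | IsOpen U ∧
        {n : ℕ | (U ∩ Function.support (fn n)).Nonempty}.Finite})
    (E : Set (K × ℝ))
    (hE : E = closure {p : K × ℝ | p.1 ∈ D ∧ p.2 = ∑' n, fn n p.1})
    (hstrong : {p : K × ℝ | p.2 = ∑' n, fn n p.1} ⊆ E) :
    IsCompact E ∧ IsConnected E := by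
  classical
  set g : K → ℝ := fun x => ∑' n, fn n x with hgdef
  have hgraphE : ∀ x : K, (x, g x) ∈ E := fun x => hstrong rfl
  have hsuppo : ∀ n : ℕ, IsOpen (Function.support ⇑(fn n)) := by
    intro n
    rw [Function.support_eq_preimage]
    exact (isClosed_singleton.isOpen_compl).preimage (fn n).continuous
  have hg_single : ∀ (n : ℕ) (x : K), fn n x ≠ 0 → g x = fn n x := by
    intro n x hx
    exact tsum_eq_single n fun m hm => (mul_eq_zero.mp (hdisj m n hm x)).resolve_right hx
  have hg_zero : ∀ x : K, (∀ n, fn n x = 0) → g x = 0 := by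
    intro x hx
    have : (fun n => fn n x) = fun _ => (0 : ℝ) := funext hx
    rw [hgdef]; simp only [this, tsum_zero]
  have hzero_cl : ∀ (n m : ℕ), m ≠ n → ∀ x ∈ closure (Function.support ⇑(fn n)), fn m x = 0 := by
    intro n m hmn x hx
    by_contra h0
    have hopen : IsOpen {y : K | fn m y ≠ 0} :=
      (isClosed_singleton.isOpen_compl).preimage (fn m).continuous
    obtain ⟨v, hv1, hv2⟩ := mem_closure_iff.mp hx _ hopen h0
    exact hv1 ((mul_eq_zero.mp (hdisj m n hmn v)).resolve_right hv2)
  have hg_cl : ∀ (n : ℕ), ∀ x ∈ closure (Function.support ⇑(fn n)), g x = fn n x := by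
    intro n x hx
    by_cases h : fn n x = 0
    · rw [h]
      apply hg_zero
      intro m
      by_cases hm : m = n
      · rw [hm]; exact h
      · exact hzero_cl n m hm x hx
    · exact hg_single n x h
  have hgIcc : ∀ x : K, g x ∈ Icc (0 : ℝ) 1 := by
    intro x
    by_cases h : ∃ n, fn n x ≠ 0
    · obtain ⟨n, hn⟩ := h
      rw [hg_single n x hn]; exact hfn n x
    · push_neg at h
      rw [hg_zero x h]
      exact ⟨le_refl 0, zero_le_one⟩
  -- Compactness
  have hEc : IsCompact E := by
    have h1 : IsCompact ((univ : Set K) ×ˢ Icc (0 : ℝ) 1) := isCompact_univ.prod isCompact_Icc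
    apply h1.of_isClosed_subset (hE ▸ isClosed_closure)
    rw [hE]
    apply closure_minimal _ (isCompact_univ.prod isCompact_Icc).isClosed
    rintro ⟨x, y⟩ ⟨-, hy⟩
    exact ⟨mem_univ x, hy ▸ hgIcc x⟩
  refine ⟨hEc, ?_, ?_⟩
  · obtain ⟨x0⟩ : Nonempty K := inferInstance
    exact ⟨(x0, g x0), hgraphE x0⟩
  -- Preconnectedness
  intro U V hUo hVo hcov hU hV
  by_contra hne
  rw [Set.not_nonempty_iff_eq_empty] at hne
  have hdis : ∀ p : K × ℝ, p ∈ E → p ∈ U → p ∈ V → False := by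
    intro p h1 h2 h3
    have : p ∈ E ∩ (U ∩ V) := ⟨h1, h2, h3⟩
    rw [hne] at this; exact this
  -- the main symmetric argument
  have main : ∀ U' V' : Set (K × ℝ), IsOpen U' → IsOpen V' → E ⊆ U' ∪ V' →
      (∀ p : K × ℝ, p ∈ E → p ∈ U' → p ∈ V' → False) →
      ∀ x', x' ∈ closure {x : K | (x, g x) ∈ U'} → (x', g x') ∈ V' → False := by
    intro U V hUo hVo hcov hdis x' hxcl hxV
    set KU : Set K := {x : K | (x, g x) ∈ U} with hKUdef
    obtain ⟨𝒰, h𝒰U, h𝒰n⟩ := mem_closure_iff_ultrafilter.mp hxcl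
    by_cases hsup : ∃ m : ℕ, Function.support ⇑(fn m) ∈ 𝒰
    · -- easy case : one support is large
      obtain ⟨m, hm⟩ := hsup
      have hxm : x' ∈ closure (Function.support ⇑(fn m)) :=
        mem_closure_iff_ultrafilter.mpr ⟨𝒰, hm, h𝒰n⟩
      have hgx : g x' = fn m x' := hg_cl m x' hxm
      have htend : Filter.Tendsto (fun w : K => ((w, fn m w) : K × ℝ)) ↑𝒰 (𝓝 (x', fn m x')) :=
        ((continuous_id.prodMk (fn m).continuous).tendsto x').mono_left h𝒰n
      have hVmem : V ∈ Filter.map (fun w : K => ((w, fn m w) : K × ℝ)) ↑𝒰 := by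
        apply htend
        apply hVo.mem_nhds
        rwa [← hgx]
      have hUmem : {p : K × ℝ | p ∈ E ∧ p ∈ U} ∈
          Filter.map (fun w : K => ((w, fn m w) : K × ℝ)) ↑𝒰 := by
        rw [Filter.mem_map]
        apply Filter.mem_of_superset (inter_mem hm h𝒰U)
        rintro w ⟨hw1, hw2⟩
        have hgw : g w = fn m w := hg_single m w hw1
        show ((w, fn m w) : K × ℝ) ∈ E ∧ ((w, fn m w) : K × ℝ) ∈ U
        rw [← hgw]
        exact ⟨hgraphE w, hw2⟩
      obtain ⟨p, hpV, hpE, hpU⟩ := Filter.nonempty_of_mem (inter_mem hVmem hUmem)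
      exact hdis p hpE hpU hpV
    · -- hard case
      push_neg at hsup
      have hx'Z : ∀ m : ℕ, fn m x' = 0 := by
        intro m
        by_contra h
        exact hsup m (h𝒰n ((hsuppo m).mem_nhds h))
      -- the bump lemma
      have hbump : ∀ (n : ℕ) (w : K), fn n w ≠ 0 →
          ∃ y ∈ connectedComponentIn (closure (Function.support ⇑(fn n))) w, fn n y = 0 := by
        intro n w hw
        by_contra h
        push_neg at h
        have hcomp : connectedComponentIn (closure (Function.support ⇑(fn n))) w ⊆
            Function.support ⇑(fn n) := by
          intro z hz
          exact h z hz
        obtain ⟨W, hWclopen, hwW, hWO⟩ := clopen_sandwich _ (hsuppo n) w hw hcomp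
        have hWuniv : W = univ := hWclopen.eq_univ ⟨w, hwW⟩
        have hx'W : x' ∈ W := by rw [hWuniv]; exact mem_univ x'
        exact (hWO hx'W) (hx'Z n)
      -- the component assignment
      set C : K → Set K := fun w =>
        if hw : ∃ m : ℕ, fn m w ≠ 0 then
          connectedComponentIn (closure (Function.support ⇑(fn hw.choose))) w
        else {w} with hCdef
      have hself : ∀ w, w ∈ C w := by
        intro w
        by_cases hw : ∃ m : ℕ, fn m w ≠ 0
        · rw [hCdef]; simp only [dif_pos hw]
          exact mem_connectedComponentIn (subset_closure hw.choose_spec)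
        · rw [hCdef]; simp only [dif_neg hw]
          exact mem_singleton w
      have hCpre : ∀ w, IsPreconnected (C w) := by
        intro w
        by_cases hw : ∃ m : ℕ, fn m w ≠ 0
        · rw [hCdef]; simp only [dif_pos hw]
          exact isPreconnected_connectedComponentIn
        · rw [hCdef]; simp only [dif_neg hw]
          exact isPreconnected_singleton
      -- color lemma: on C w the graph stays on the U side
      have hCU : ∀ w ∈ KU, ∀ z ∈ C w, (z, g z) ∈ U := by
        intro w hwU z hz
        by_cases hw : ∃ m : ℕ, fn m w ≠ 0
        · rw [hCdef] at hz; simp only [dif_pos hw] at hz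
          set n : ℕ := hw.choose with hn
          have hfnw : fn n w ≠ 0 := hw.choose_spec
          set F : Set K := closure (Function.support ⇑(fn n)) with hF
          have himgpre : IsPreconnected ((fun u : K => ((u, fn n u) : K × ℝ)) ''
              connectedComponentIn F w) :=
            isPreconnected_connectedComponentIn.image _
              ((continuous_id.prodMk (fn n).continuous).continuousOn)
          have hgr : ∀ u ∈ connectedComponentIn F w, ((u, fn n u) : K × ℝ) = (u, g u) := by
            intro u hu
            rw [hg_cl n u (connectedComponentIn_subset F w hu)]
          rcases hcov (hgraphE z) with h | h
          · exact h
          exfalso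
          have himgE : ∀ p ∈ (fun u : K => ((u, fn n u) : K × ℝ)) ''
              connectedComponentIn F w, p ∈ E := by
            rintro _ ⟨u, hu, rfl⟩
            show ((u, fn n u) : K × ℝ) ∈ E
            rw [hgr u hu]; exact hgraphE u
          have hne1 : (((fun u : K => ((u, fn n u) : K × ℝ)) '' connectedComponentIn F w) ∩
              U).Nonempty := by
            refine ⟨(w, fn n w), mem_image_of_mem _ (mem_connectedComponentIn
              (subset_closure hfnw)), ?_⟩
            rw [hgr w (mem_connectedComponentIn (subset_closure hfnw))]
            exact hwU
          have hne2 : (((fun u : K => ((u, fn n u) : K × ℝ)) '' connectedComponentIn F w) ∩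
              V).Nonempty := by
            refine ⟨(z, fn n z), mem_image_of_mem _ hz, ?_⟩
            rw [hgr z hz]
            exact h
          obtain ⟨p, hp1, hp2, hp3⟩ := himgpre U V hUo hVo
            (fun p hp => hcov (himgE p hp)) hne1 hne2
          exact hdis p (himgE p hp1) hp2 hp3
        · rw [hCdef] at hz; simp only [dif_neg hw] at hz
          rw [hz]; exact hwU
      -- zero points in each component
      have hy : ∀ w : K, ∃ y, y ∈ C w ∧ ∀ m, fn m y = 0 := by
        intro w
        by_cases hw : ∃ m : ℕ, fn m w ≠ 0
        · obtain ⟨y, hy1, hy2⟩ := hbump hw.choose w hw.choose_spec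
          refine ⟨y, by rw [hCdef]; simp only [dif_pos hw]; exact hy1, ?_⟩
          intro m
          by_cases hm : m = hw.choose
          · rw [hm]; exact hy2
          · exact hzero_cl hw.choose m hm y
              (connectedComponentIn_subset _ _ hy1)
        · have hall : ∀ m, fn m w = 0 := by
            intro m
            by_contra hc
            exact hw ⟨m, hc⟩
          refine ⟨w, ?_, hall⟩
          rw [hCdef]
          simp only [dif_neg hw]
          exact mem_singleton w
      set y' : K → K := fun w => (hy w).choose with hy'def
      have hy'C : ∀ w, y' w ∈ C w := fun w => (hy w).choose_spec.1
      have hy'Z : ∀ w m, fn m (y' w) = 0 := fun w => (hy w).choose_spec.2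
      have hy'g : ∀ w, g (y' w) = 0 := fun w => hg_zero _ (hy'Z w)
      have hy'EU : ∀ w ∈ KU, ((y' w, (0 : ℝ)) : K × ℝ) ∈ E ∧ ((y' w, (0 : ℝ)) : K × ℝ) ∈ U := by
        intro w hw
        constructor
        · rw [show ((y' w, (0:ℝ)) : K × ℝ) = (y' w, g (y' w)) by rw [hy'g w]]
          exact hgraphE _
        · rw [show ((y' w, (0:ℝ)) : K × ℝ) = (y' w, g (y' w)) by rw [hy'g w]]
          exact hCU w hw (y' w) (hy'C w)
      -- the limit point y*
      obtain ⟨ystar, -, hystar⟩ := isCompact_univ.ultrafilter_le_nhds (𝒰.map y')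
        (by rw [le_principal_iff]; exact univ_mem)
      have hystarZ : ∀ m, fn m ystar = 0 := by
        intro m
        have hmem : {x : K | fn m x = 0} ∈ 𝒰.map y' := by
          rw [Ultrafilter.mem_map]
          apply Filter.mem_of_superset (univ_mem (f := (𝒰 : Filter K)))
          intro w _
          exact hy'Z w m
        have : ystar ∈ closure {x : K | fn m x = 0} :=
          mem_closure_iff_ultrafilter.mpr ⟨𝒰.map y', hmem, hystar⟩
        have hcl : IsClosed {x : K | fn m x = 0} :=
          isClosed_singleton.preimage (fn m).continuous
        rwa [hcl.closure_eq] at this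
      have hystarg : g ystar = 0 := hg_zero _ hystarZ
      have hystarE : ((ystar, (0 : ℝ)) : K × ℝ) ∈ E := by
        rw [show ((ystar, (0:ℝ)) : K × ℝ) = (ystar, g ystar) by rw [hystarg]]
        exact hgraphE _
      have hystarU : ((ystar, (0 : ℝ)) : K × ℝ) ∈ U := by
        rcases hcov hystarE with h | h
        · exact h
        exfalso
        have htd : Filter.Tendsto (fun w : K => ((y' w, (0 : ℝ)) : K × ℝ)) ↑𝒰
            (𝓝 (ystar, (0 : ℝ))) := by
          have h1 : Filter.Tendsto y' ↑𝒰 (𝓝 ystar) := hystar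
          exact ((continuous_id.prodMk continuous_const).tendsto ystar).comp h1
        have hVmem : V ∈ Filter.map (fun w : K => ((y' w, (0 : ℝ)) : K × ℝ)) ↑𝒰 :=
          htd (hVo.mem_nhds h)
        have hUmem : {p : K × ℝ | p ∈ E ∧ p ∈ U} ∈
            Filter.map (fun w : K => ((y' w, (0 : ℝ)) : K × ℝ)) ↑𝒰 := by
          rw [Filter.mem_map]
          apply Filter.mem_of_superset h𝒰U
          intro w hw
          exact hy'EU w hw
        obtain ⟨p, hpV, hpE, hpU⟩ := Filter.nonempty_of_mem (inter_mem hVmem hUmem)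
        exact hdis p hpE hpU hpV
      -- the limit continuum
      set L : Set K := limSet 𝒰 KU C with hLdef
      have hx'L : x' ∈ L := by
        apply mem_limSet
        intro O hO hpO S hS
        have : (O ∩ (S ∩ KU)) ∈ 𝒰 := inter_mem (h𝒰n (hO.mem_nhds hpO)) (inter_mem hS h𝒰U)
        obtain ⟨w, hwO, hwS⟩ := (𝒰 : Filter K).nonempty_of_mem this
        exact ⟨w, hwS, w, hself w, hwO⟩
      have hystarL : ystar ∈ L := by
        apply mem_limSet
        intro O hO hpO S hS
        have hOmem : y' ⁻¹' O ∈ 𝒰 :=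
          Ultrafilter.mem_map.mp (hystar (hO.mem_nhds hpO))
        have : (y' ⁻¹' O ∩ (S ∩ KU)) ∈ 𝒰 := inter_mem hOmem (inter_mem hS h𝒰U)
        obtain ⟨w, hwO, hwS⟩ := (𝒰 : Filter K).nonempty_of_mem this
        exact ⟨w, hwS, y' w, hy'C w, hwO⟩
      have hLZ : ∀ z ∈ L, ∀ m, fn m z = 0 := by
        intro z hz m
        have hSm : (Function.support ⇑(fn m))ᶜ ∈ 𝒰 :=
          Ultrafilter.compl_mem_iff_notMem.mpr (hsup m)
        have hcl : IsClosed {x : K | fn m x = 0} :=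
          isClosed_singleton.preimage (fn m).continuous
        refine limSet_subset hSm hcl ?_ hz
        rintro w ⟨hwS, _⟩
        by_cases hw : ∃ k : ℕ, fn k w ≠ 0
        · have hnm : hw.choose ≠ m := by
            intro heq
            apply hwS
            rw [← heq]
            exact hw.choose_spec
          rw [hCdef]; simp only [dif_pos hw]
          intro u hu
          exact hzero_cl hw.choose m (Ne.symm hnm) u
            (connectedComponentIn_subset _ _ hu)
        · rw [hCdef]; simp only [dif_neg hw]
          intro u hu
          rw [hu]
          by_contra h
          exact hwS h
      have hLpre : IsPreconnected L := limSet_preconnected h𝒰U hCpre hself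
      -- final contradiction
      have hzeta : IsPreconnected ((fun z : K => ((z, (0 : ℝ)) : K × ℝ)) '' L) :=
        hLpre.image _ ((continuous_id.prodMk continuous_const).continuousOn)
      have hzetaE : ∀ p ∈ (fun z : K => ((z, (0 : ℝ)) : K × ℝ)) '' L, p ∈ E := by
        rintro _ ⟨z, hzL, rfl⟩
        show ((z, (0:ℝ)) : K × ℝ) ∈ E
        rw [show ((z, (0:ℝ)) : K × ℝ) = (z, g z) by rw [hg_zero z (hLZ z hzL)]]
        exact hgraphE z
      have hne1 : (((fun z : K => ((z, (0 : ℝ)) : K × ℝ)) '' L) ∩ U).Nonempty :=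
        ⟨(ystar, 0), mem_image_of_mem _ hystarL, hystarU⟩
      have hne2 : (((fun z : K => ((z, (0 : ℝ)) : K × ℝ)) '' L) ∩ V).Nonempty := by
        refine ⟨(x', 0), mem_image_of_mem _ hx'L, ?_⟩
        rwa [show ((x', (0:ℝ)) : K × ℝ) = (x', g x') by rw [hg_zero x' hx'Z]]
      obtain ⟨p, hp1, hp2, hp3⟩ := hzeta U V hUo hVo (fun p hp => hcov (hzetaE p hp)) hne1 hne2
      exact hdis p (hzetaE p hp1) hp2 hp3
  -- use the main argument
  set KU : Set K := {x : K | (x, g x) ∈ U} with hKUdef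
  set KV : Set K := {x : K | (x, g x) ∈ V} with hKVdef
  have hKor : ∀ x : K, x ∈ KU ∨ x ∈ KV := fun x => hcov (hgraphE x)
  have hKdisj : ∀ x : K, x ∈ KU → x ∈ KV → False :=
    fun x h1 h2 => hdis (x, g x) (hgraphE x) h1 h2
  have hKUne : KU.Nonempty := by
    obtain ⟨e, heE, heU⟩ := hU
    have hecl : e ∈ closure {p : K × ℝ | p.1 ∈ D ∧ p.2 = g p.1} := hE ▸ heE
    obtain ⟨⟨s1, s2⟩, hsU, -, hsg⟩ := mem_closure_iff.mp hecl U hUo heU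
    refine ⟨s1, ?_⟩
    show (s1, g s1) ∈ U
    have : s2 = g s1 := hsg
    rwa [← this]
  have hKVne : KV.Nonempty := by
    obtain ⟨e, heE, heV⟩ := hV
    have hecl : e ∈ closure {p : K × ℝ | p.1 ∈ D ∧ p.2 = g p.1} := hE ▸ heE
    obtain ⟨⟨s1, s2⟩, hsV, -, hsg⟩ := mem_closure_iff.mp hecl V hVo heV
    refine ⟨s1, ?_⟩
    show (s1, g s1) ∈ V
    have : s2 = g s1 := hsg
    rwa [← this]
  by_cases h1 : (closure KU ∩ KV).Nonempty
  · obtain ⟨x', hx1, hx2⟩ := h1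
    exact main U V hUo hVo hcov hdis x' hx1 hx2
  by_cases h2 : (closure KV ∩ KU).Nonempty
  · obtain ⟨x', hx1, hx2⟩ := h2
    exact main V U hVo hUo (fun p hp => (hcov hp).symm)
      (fun p hp hpV hpU => hdis p hp hpU hpV) x' hx1 hx2
  · -- both closures stay put : KU is clopen
    rw [Set.not_nonempty_iff_eq_empty] at h1 h2
    have hKUclosed : IsClosed KU := by
      rw [← closure_subset_iff_isClosed]
      intro z hz
      rcases hKor z with h | h
      · exact h
      · exfalso
        have hmem : z ∈ closure KU ∩ KV := ⟨hz, h⟩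
        rw [h1] at hmem
        exact hmem
    have hKVclosed : IsClosed KV := by
      rw [← closure_subset_iff_isClosed]
      intro z hz
      rcases hKor z with h | h
      · exfalso
        have hmem : z ∈ closure KV ∩ KU := ⟨hz, h⟩
        rw [h2] at hmem
        exact hmem
      · exact h
    have hKUopen : IsOpen KU := by
      have : KU = KVᶜ := by
        apply Subset.antisymm
        · intro z hz hzV
          exact hKdisj z hz hzV
        · intro z hz
          exact (hKor z).resolve_right hz
      rw [this]
      exact hKVclosed.isOpen_compl
    rcases isClopen_iff.mp ⟨hKUclosed, hKUopen⟩ with h | h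
    · rw [h] at hKUne; exact hKUne.ne_empty rfl
    · obtain ⟨v, hv⟩ := hKVne
      exact hKdisj v (h ▸ mem_univ v) hv
end
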